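/- Derivative of the forward value with respect to a local kernel entry equals the product of forward and backward sums: fix natural numbers n and a cell (i,j) with i ≤ n and j ≤ n, let k : ℕ × ℕ → ℝ be fixed weights, and for t ∈ ℝ let k_t agree with k except that k_t(i,j) = t. Let C_t(n,n) denote the value at (n,n) of the recursion C_t(p,q) = k_t(p,q)·(C_t(p−1,q) + C_t(p−1,q−1) + C_t(p,q−1)) with conventions C_t(−1,−1) = 1, C_t(p,−1) = C_t(−1,q) = 0. Then t ↦ C_t(n,n) is differentiable on ℝ and its derivative at every t equals F′(i,j) · B′(i,j), where F′(i,j) = ∑_π ∏_{l<L_π} k(π(l)) over alignment paths π from (0,0) to (i,j) with the factor at the final cell (i,j) omitted, and B′(i,j) = ∑_σ ∏_{0<l≤L_σ} k(σ(l)) over alignment paths σ from (i,j) to (n,n) with the factor at the initial cell (i,j) omitted (equivalently, F′(i,j) = C(i−1,j−1) + C(i−1,j) + C(i,j−1) and B′(i,j) is the analogous sum of backward-matrix entries). -/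

import Mathlib

/-!
Splitting an alignment path at its last step turns both the forward values and the backward
sums into recursions over the three predecessor cells. After replacing `k (i, j)` by `t`, the
`t`-derivatives of the forward values satisfy the backward recursion from `(i, j)`, seeded at
`(i, j)` by `F′(i, j)`, which does not involve `t`; so they are `F′(i, j)` times the backward sums.
-/

/-- `IsAlignPath a b π` : the list of grid cells `π` is an alignment path from `a` to
`b`, i.e. it is nonempty, starts at `a`, ends at `b`, and each increment between
consecutive cells belongs to `{(1,0), (0,1), (1,1)}`. -/
def IsAlignPath (a b : ℕ × ℕ) (π : List (ℕ × ℕ)) : Prop :=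
  π.head? = some a ∧ π.getLast? = some b ∧
  π.Chain' (fun u v : ℕ × ℕ => v = u + (1, 0) ∨ v = u + (0, 1) ∨ v = u + (1, 1))

open Finset

def IsAlignStep (u v : ℕ × ℕ) : Prop :=
  v = u + (1, 0) ∨ v = u + (0, 1) ∨ v = u + (1, 1)

theorem IsAlignStep.lt {u v : ℕ × ℕ} (h : IsAlignStep u v) : u.1 + u.2 < v.1 + v.2 := by
  rcases h with rfl | rfl | rfl <;> simp only [Prod.fst_add, Prod.snd_add] <;> omega

def stepPreds : ℕ × ℕ → Finset (ℕ × ℕ)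
  | (0, 0) => ∅
  | (0, q + 1) => {(0, q)}
  | (p + 1, 0) => {(p, 0)}
  | (p + 1, q + 1) => {(p, q + 1), (p, q), (p + 1, q)}

theorem mem_stepPreds {c b : ℕ × ℕ} : c ∈ stepPreds b ↔ IsAlignStep c b := by
  obtain ⟨x, y⟩ := c
  rcases b with ⟨_ | p, _ | q⟩ <;> simp [stepPreds, IsAlignStep] <;> omega

theorem sum_stepPreds {M : Type*} [AddCommMonoid M] (G : ℕ → ℕ → M)
    (hG₀ : ∀ q, G 0 (q + 1) = 0) (hG₀' : ∀ p, G (p + 1) 0 = 0) {p q : ℕ}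
    (hpq : (p, q) ≠ (0, 0)) :
    ∑ c ∈ stepPreds (p, q), G (c.1 + 1) (c.2 + 1) = G p (q + 1) + G p q + G (p + 1) q := by
  rcases p with _ | p <;> rcases q with _ | q
  · exact absurd rfl hpq
  · simp [stepPreds, hG₀]
  · simp [stepPreds, hG₀']
  · rw [stepPreds, sum_insert (by simp), sum_insert (by simp), sum_singleton, ← add_assoc]

theorem isAlignPath_iff {a b : ℕ × ℕ} {π : List (ℕ × ℕ)} :
    IsAlignPath a b π ↔ π.head? = some a ∧ π.getLast? = some b ∧ π.IsChain IsAlignStep :=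
  Iff.rfl

theorem IsAlignPath.ne_nil {a b : ℕ × ℕ} {π : List (ℕ × ℕ)} (h : IsAlignPath a b π) :
    π ≠ [] := by
  rintro rfl
  simp [IsAlignPath] at h

theorem IsAlignPath.length_le {a b : ℕ × ℕ} {π : List (ℕ × ℕ)} (h : IsAlignPath a b π) :
    a.1 + a.2 + π.length ≤ b.1 + b.2 + 1 := by
  induction π generalizing a with
  | nil => exact absurd rfl h.ne_nil
  | cons x xs ih =>
    obtain ⟨hh, hl, hc⟩ := isAlignPath_iff.mp h
    obtain rfl : x = a := by simpa using hh
    cases xs with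
    | nil =>
      obtain rfl : x = b := by simpa using hl
      simp
    | cons y ys =>
      rw [List.isChain_cons_cons] at hc
      have := ih ⟨rfl, by rwa [List.getLast?_cons_cons] at hl, hc.2⟩
      have := hc.1.lt
      simp only [List.length_cons] at *
      omega

theorem isAlignPath_self_iff {a : ℕ × ℕ} {π : List (ℕ × ℕ)} : IsAlignPath a a π ↔ π = [a] := by
  refine ⟨fun h => ?_, fun h => h ▸ ⟨rfl, rfl, List.isChain_singleton a⟩⟩
  obtain ⟨x, rfl⟩ : ∃ x, π = [x] := List.length_eq_one_iff.mp <| by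
    have := h.length_le
    have := List.length_pos_iff.mpr h.ne_nil
    omega
  simpa [IsAlignPath] using h.1

theorem isAlignPath_append_singleton_iff {a b x : ℕ × ℕ} {π : List (ℕ × ℕ)} (hπ : π ≠ []) :
    IsAlignPath a b (π ++ [x]) ↔ x = b ∧ ∃ c, IsAlignStep c x ∧ IsAlignPath a c π := by
  obtain ⟨c, hc⟩ := Option.ne_none_iff_exists'.mp (List.getLast?_eq_none_iff.not.mpr hπ)
  simp only [isAlignPath_iff, List.head?_append_of_ne_nil _ hπ, List.getLast?_concat,
    Option.some.injEq, List.isChain_append, List.isChain_singleton, hc, Option.mem_def,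
    List.head?_cons, forall_eq', true_and]
  constructor
  · rintro ⟨hh, rfl, hch, hs⟩
    exact ⟨rfl, c, hs, hh, rfl, hch⟩
  · rintro ⟨rfl, c', hs, hh, rfl, hch⟩
    exact ⟨hh, rfl, hch, hs⟩

theorem IsAlignPath.prod_map {M : Type*} [CommMonoid M] {a b : ℕ × ℕ} {π : List (ℕ × ℕ)}
    (h : IsAlignPath a b π) (w : ℕ × ℕ → M) :
    (π.map w).prod = (π.dropLast.map w).prod * w b := by
  conv_lhs => rw [← List.dropLast_append_getLast? b h.2.1]
  simp

theorem setOf_isAlignPath_of_ne {a b : ℕ × ℕ} (hba : b ≠ a) :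
    {π | IsAlignPath a b π} = ⋃ c ∈ stepPreds b, (· ++ [b]) '' {π | IsAlignPath a c π} := by
  ext π
  simp only [Set.mem_ofPred_eq, Set.mem_iUnion, Set.mem_image, mem_stepPreds, exists_prop]
  constructor
  · intro h
    obtain ⟨π', x, rfl⟩ : ∃ π' x, π = π' ++ [x] :=
      ⟨_, _, (List.dropLast_append_getLast h.ne_nil).symm⟩
    have hπ' : π' ≠ [] := by
      rintro rfl
      exact hba (by simpa [IsAlignPath] using h.2.1.symm.trans h.1)
    obtain ⟨rfl, c, hs, hc⟩ := (isAlignPath_append_singleton_iff hπ').mp h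
    exact ⟨c, hs, π', hc, rfl⟩
  · rintro ⟨c, hs, π', hc, rfl⟩
    exact (isAlignPath_append_singleton_iff hc.ne_nil).mpr ⟨rfl, c, hs, hc⟩

theorem finite_setOf_isAlignPath (a b : ℕ × ℕ) : {π | IsAlignPath a b π}.Finite := by
  by_cases hba : b = a
  · subst hba
    simp only [isAlignPath_self_iff, Set.ofPred_eq_eq_singleton, Set.finite_singleton]
  · rw [setOf_isAlignPath_of_ne hba]
    exact (stepPreds b).finite_toSet.biUnion fun c hc => (finite_setOf_isAlignPath a c).image _
termination_by b.1 + b.2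
decreasing_by exact (mem_stepPreds.mp hc).lt

noncomputable def alignPaths (a b : ℕ × ℕ) : Finset (List (ℕ × ℕ)) :=
  (finite_setOf_isAlignPath a b).toFinset

@[simp]
theorem mem_alignPaths {a b : ℕ × ℕ} {π : List (ℕ × ℕ)} :
    π ∈ alignPaths a b ↔ IsAlignPath a b π :=
  Set.Finite.mem_toFinset _

theorem alignPaths_self (a : ℕ × ℕ) : alignPaths a a = {[a]} := by
  ext π
  simp [isAlignPath_self_iff]

theorem sum_alignPaths_of_ne {M : Type*} [AddCommMonoid M] (f : List (ℕ × ℕ) → M)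
    {a b : ℕ × ℕ} (hba : b ≠ a) :
    ∑ π ∈ alignPaths a b, f π = ∑ c ∈ stepPreds b, ∑ π ∈ alignPaths a c, f (π ++ [b]) := by
  have hpaths : alignPaths a b =
      (stepPreds b).biUnion fun c => (alignPaths a c).image (· ++ [b]) := by
    ext π
    simpa using Set.ext_iff.mp (setOf_isAlignPath_of_ne hba) π
  have hdisj : (stepPreds b : Set (ℕ × ℕ)).PairwiseDisjoint
      fun c => (alignPaths a c).image (· ++ [b]) := by
    intro c _ c' _ hcc'
    simp only [Function.onFun, disjoint_left, mem_image, mem_alignPaths]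
    rintro _ ⟨π, hπ, rfl⟩ ⟨π', hπ', hππ'⟩
    obtain rfl := List.append_left_injective [b] hππ'
    exact hcc' (Option.some.inj (hπ.2.1.symm.trans hπ'.2.1))
  rw [hpaths, sum_biUnion hdisj]
  exact sum_congr rfl fun c _ => sum_image fun _ _ _ _ h => List.append_left_injective [b] h

section Recursions

variable {R : Type*} [CommSemiring R]

/-- `forwardMatrix w (p + 1) (q + 1)` is the forward value at the cell `(p, q)`: the indices are
shifted by one so that the boundary row and column `-1` become `0`. -/
def forwardMatrix (w : ℕ × ℕ → R) : ℕ → ℕ → R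
  | 0, 0 => 1
  | 0, _ + 1 => 0
  | _ + 1, 0 => 0
  | p + 1, q + 1 =>
    w (p, q) * (forwardMatrix w p (q + 1) + forwardMatrix w p q + forwardMatrix w (p + 1) q)

/-- The paper's `F′(p, q) = C(p-1, q-1) + C(p-1, q) + C(p, q-1)`. -/
def forwardPredSum (w : ℕ × ℕ → R) (p q : ℕ) : R :=
  forwardMatrix w p (q + 1) + forwardMatrix w p q + forwardMatrix w (p + 1) q

/-- Shifted like `forwardMatrix`; the entry at `(p + 1, q + 1)` turns out to be the backward sum
over alignment paths from `c` to `(p, q)`. -/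
def backwardMatrix (w : ℕ × ℕ → R) (c : ℕ × ℕ) : ℕ → ℕ → R
  | 0, _ => 0
  | _ + 1, 0 => 0
  | p + 1, q + 1 =>
    if (p, q) = c then 1
    else w (p, q) * (backwardMatrix w c p (q + 1) + backwardMatrix w c p q +
      backwardMatrix w c (p + 1) q)

theorem forwardMatrix_succ_succ (w : ℕ × ℕ → R) (p q : ℕ) :
    forwardMatrix w (p + 1) (q + 1) = w (p, q) * forwardPredSum w p q :=
  forwardMatrix.eq_4 w p q

theorem forwardMatrix_congr {w w' : ℕ × ℕ → R} {p q : ℕ}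
    (h : ∀ x y, x < p → y < q → w (x, y) = w' (x, y)) :
    forwardMatrix w p q = forwardMatrix w' p q := by
  induction p, q using forwardMatrix.induct with
  | case1 | case2 | case3 => simp only [forwardMatrix]
  | case4 p q ih₁ ih₂ ih₃ =>
    rw [forwardMatrix_succ_succ, forwardMatrix_succ_succ, forwardPredSum, forwardPredSum,
      h p q (by omega) (by omega), ih₁ fun x y hx hy => h x y (by omega) hy,
      ih₂ fun x y hx hy => h x y (by omega) (by omega), ih₃ fun x y hx hy => h x y hx (by omega)]

theorem forwardPredSum_update_self (w : ℕ × ℕ → R) (p q : ℕ) (t : R) :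
    forwardPredSum (Function.update w (p, q) t) p q = forwardPredSum w p q := by
  have hw : ∀ x y, (x, y) ≠ (p, q) → Function.update w (p, q) t (x, y) = w (x, y) :=
    fun x y hxy => Function.update_of_ne hxy t w
  unfold forwardPredSum
  rw [forwardMatrix_congr fun x y hx _ => hw x y (by grind),
    forwardMatrix_congr fun x y hx _ => hw x y (by grind),
    forwardMatrix_congr fun x y _ hy => hw x y (by grind)]

theorem eq_forwardMatrix_of_recursion {w : ℕ × ℕ → R} {D : ℤ → ℤ → R}
    (h₀ : D (-1) (-1) = 1) (h₁ : ∀ p : ℕ, D p (-1) = 0) (h₂ : ∀ q : ℕ, D (-1) q = 0)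
    (hrec : ∀ p q : ℕ, D p q = w (p, q) * (D (p - 1) q + D (p - 1) (q - 1) + D p (q - 1)))
    (p q : ℕ) : D (p - 1) (q - 1) = forwardMatrix w p q := by
  induction p, q using forwardMatrix.induct with
  | case1 => simpa [forwardMatrix] using h₀
  | case2 q => simpa [forwardMatrix] using h₂ q
  | case3 p => simpa [forwardMatrix] using h₁ p
  | case4 p q ih₁ ih₂ ih₃ =>
    simp only [Nat.succ_eq_add_one, Nat.cast_add_one, add_sub_cancel_right] at ih₁ ih₃ ⊢
    rw [hrec, ih₁, ih₂, ih₃, forwardMatrix_succ_succ, forwardPredSum]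

theorem sum_alignPaths_dropLast_prod (w : ℕ × ℕ → R) (b : ℕ × ℕ) :
    ∑ π ∈ alignPaths (0, 0) b, (π.dropLast.map w).prod = forwardPredSum w b.1 b.2 := by
  by_cases hb : b = (0, 0)
  · subst hb
    simp [alignPaths_self, forwardPredSum, forwardMatrix]
  · rw [sum_alignPaths_of_ne _ hb]
    simp only [List.dropLast_concat]
    calc ∑ c ∈ stepPreds b, ∑ π ∈ alignPaths (0, 0) c, (π.map w).prod
        = ∑ c ∈ stepPreds b, forwardMatrix w (c.1 + 1) (c.2 + 1) := by
          refine sum_congr rfl fun c hc => ?_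
          rw [forwardMatrix_succ_succ, mul_comm, ← sum_alignPaths_dropLast_prod w c, sum_mul]
          exact sum_congr rfl fun π hπ => (mem_alignPaths.mp hπ).prod_map w
      _ = forwardPredSum w b.1 b.2 :=
          sum_stepPreds (forwardMatrix w) (fun _ => by simp only [forwardMatrix])
            (fun _ => by simp only [forwardMatrix]) hb
termination_by b.1 + b.2
decreasing_by exact (mem_stepPreds.mp hc).lt

theorem sum_alignPaths_tail_prod (w : ℕ × ℕ → R) (c b : ℕ × ℕ) :
    ∑ π ∈ alignPaths c b, (π.tail.map w).prod = backwardMatrix w c (b.1 + 1) (b.2 + 1) := by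
  by_cases hbc : b = c
  · subst hbc
    simp [alignPaths_self, backwardMatrix]
  · rw [sum_alignPaths_of_ne _ hbc, backwardMatrix, if_neg hbc]
    calc ∑ c' ∈ stepPreds b, ∑ π ∈ alignPaths c c', ((π ++ [b]).tail.map w).prod
        = (∑ c' ∈ stepPreds b, backwardMatrix w c (c'.1 + 1) (c'.2 + 1)) * w b := by
          rw [sum_mul]
          refine sum_congr rfl fun c' hc' => ?_
          rw [← sum_alignPaths_tail_prod w c c', sum_mul]
          refine sum_congr rfl fun π hπ => ?_
          simp [List.tail_append_of_ne_nil (mem_alignPaths.mp hπ).ne_nil]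
      _ = w b * (backwardMatrix w c b.1 (b.2 + 1) + backwardMatrix w c b.1 b.2 +
            backwardMatrix w c (b.1 + 1) b.2) := by
          rw [mul_comm]
          by_cases hb : b = (0, 0)
          · subst hb
            simp [stepPreds, backwardMatrix]
          · rw [sum_stepPreds (backwardMatrix w c) (fun _ => by simp only [backwardMatrix])
              (fun _ => by simp only [backwardMatrix]) hb]
termination_by b.1 + b.2
decreasing_by exact (mem_stepPreds.mp hc').lt

end Recursions

theorem hasDerivAt_forwardMatrix_update {𝕜 : Type*} [NontriviallyNormedField 𝕜]
    (w : ℕ × ℕ → 𝕜) (c : ℕ × ℕ) (t : 𝕜) (p q : ℕ) :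
    HasDerivAt (fun s => forwardMatrix (Function.update w c s) p q)
      (forwardPredSum w c.1 c.2 * backwardMatrix w c p q) t := by
  induction p, q using forwardMatrix.induct with
  | case1 | case2 | case3 =>
    simpa only [forwardMatrix, backwardMatrix, mul_zero] using hasDerivAt_const t _
  | case4 p q ih₁ ih₂ ih₃ =>
    simp only [Nat.succ_eq_add_one, forwardMatrix_succ_succ, backwardMatrix]
    by_cases hc : (p, q) = c
    · subst hc
      simp only [Function.update_self, forwardPredSum_update_self, if_true, mul_one]
      exact hasDerivAt_mul_const _
    · simp only [Function.update_of_ne hc, if_neg hc]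
      exact (((ih₁.add ih₂).add ih₃).const_mul (w (p, q))).congr_deriv (by ring)

theorem forward_value_hasDerivAt_kernel_entry_general (n i j : ℕ)
    (k : ℕ × ℕ → ℝ) (C : ℝ → ℤ → ℤ → ℝ)
    (h0 : ∀ t : ℝ, C t (-1) (-1) = 1)
    (h1 : ∀ (t : ℝ) (p : ℕ), C t (p : ℤ) (-1) = 0)
    (h2 : ∀ (t : ℝ) (q : ℕ), C t (-1) (q : ℤ) = 0)
    (hrec : ∀ (t : ℝ) (p q : ℕ), C t (p : ℤ) (q : ℤ) =
      Function.update k (i, j) t (p, q) *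
        (C t ((p : ℤ) - 1) (q : ℤ) + C t ((p : ℤ) - 1) ((q : ℤ) - 1) +
          C t (p : ℤ) ((q : ℤ) - 1))) :
    ∀ t : ℝ, HasDerivAt (fun s : ℝ => C s (n : ℤ) (n : ℤ))
      ((∑ᶠ π ∈ {π : List (ℕ × ℕ) | IsAlignPath (0, 0) (i, j) π},
          (π.dropLast.map k).prod) *
        ∑ᶠ σ ∈ {σ : List (ℕ × ℕ) | IsAlignPath (i, j) (n, n) σ},
          (σ.tail.map k).prod) t := by
  intro t
  have hC : (fun s => C s n n) =
      fun s => forwardMatrix (Function.update k (i, j) s) (n + 1) (n + 1) :=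
    funext fun s => by
      simpa using eq_forwardMatrix_of_recursion (h0 s) (h1 s) (h2 s) (hrec s) (n + 1) (n + 1)
  rw [hC, finsum_mem_eq_finite_toFinset_sum _ (finite_setOf_isAlignPath _ _),
    finsum_mem_eq_finite_toFinset_sum _ (finite_setOf_isAlignPath _ _), ← alignPaths,
    ← alignPaths, sum_alignPaths_dropLast_prod, sum_alignPaths_tail_prod]
  exact hasDerivAt_forwardMatrix_update k (i, j) t (n + 1) (n + 1)

/-- Derivative of the forward value with respect to a local kernel entry: fix a cell
`(i,j)` with `i ≤ n`, `j ≤ n` and weights `k`. For `t : ℝ` let `k_t = k` except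
`k_t(i,j) = t`, and let `C t` satisfy the forward recursion
`C_t(p,q) = k_t(p,q)·(C_t(p−1,q) + C_t(p−1,q−1) + C_t(p,q−1))` with the conventions
`C_t(−1,−1) = 1`, `C_t(p,−1) = C_t(−1,q) = 0`. Then `t ↦ C_t(n,n)` is differentiable
everywhere with derivative `F′(i,j) · B′(i,j)`, where
`F′(i,j) = ∑_π ∏_{l<L_π} k(π(l))` over alignment paths `π` from `(0,0)` to `(i,j)`
with the factor at the final cell `(i,j)` omitted, and
`B′(i,j) = ∑_σ ∏_{0<l≤L_σ} k(σ(l))` over alignment paths `σ` from `(i,j)` to `(n,n)`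
with the factor at the initial cell `(i,j)` omitted. -/
theorem forward_value_hasDerivAt_kernel_entry (n i j : ℕ) (hi : i ≤ n) (hj : j ≤ n)
    (k : ℕ × ℕ → ℝ) (C : ℝ → ℤ → ℤ → ℝ)
    (h0 : ∀ t : ℝ, C t (-1) (-1) = 1)
    (h1 : ∀ (t : ℝ) (p : ℕ), C t (p : ℤ) (-1) = 0)
    (h2 : ∀ (t : ℝ) (q : ℕ), C t (-1) (q : ℤ) = 0)
    (hrec : ∀ (t : ℝ) (p q : ℕ), C t (p : ℤ) (q : ℤ) =
      Function.update k (i, j) t (p, q) *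
        (C t ((p : ℤ) - 1) (q : ℤ) + C t ((p : ℤ) - 1) ((q : ℤ) - 1) +
          C t (p : ℤ) ((q : ℤ) - 1))) :
    ∀ t : ℝ, HasDerivAt (fun s : ℝ => C s (n : ℤ) (n : ℤ))
      ((∑ᶠ π ∈ {π : List (ℕ × ℕ) | IsAlignPath (0, 0) (i, j) π},
          (π.dropLast.map k).prod) *
        ∑ᶠ σ ∈ {σ : List (ℕ × ℕ) | IsAlignPath (i, j) (n, n) σ},
          (σ.tail.map k).prod) t :=
  forward_value_hasDerivAt_kernel_entry_general n i j k C h0 h1 h2 hrec
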